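/- arXiv:1410.2680 — 3 statements merged into one kernel-verified Lean document; each statement's English description precedes it below -/
import Mathlib

section
/- Let D be a real m×n matrix with rank(D) = n, let b ∈ ℝ^m, and let P = {v ∈ ℝⁿ : D v ≤ b componentwise}. Let c ∈ ℝⁿ and suppose P is nonempty and sup{cᵀv : v ∈ P} is finite. Then there exists an extreme point v* of P (i.e., a point of P that cannot be written as (x + y)/2 with x, y ∈ P and x ≠ y) such that cᵀv* = sup{cᵀv : v ∈ P}. -/
/-!
Call a feasible point `v` a vertex when the only direction keeping every constraint active at `v`
tight is `0`. A vertex is determined by its active set, so there are finitely many vertices, and a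
vertex is not the midpoint of two distinct feasible points. From any feasible point one reaches a
vertex without decreasing `cᵀv`: since `D` is injective and `cᵀv` is bounded, some direction `e`
keeping the active constraints tight has `0 ≤ cᵀe` and `(D e)ᵢ > 0` for some `i`, and moving along
`e` until a new constraint becomes tight strictly shrinks the space of such directions. Hence the
best vertex maximizes `cᵀv` over the whole polyhedron.
-/

open Matrix

namespace Matrix

section ActiveConstraints

variable {𝕜 ι κ : Type*} [Field 𝕜] [Fintype κ] (A : Matrix ι κ 𝕜) (b : ι → 𝕜)

def polyhedron [LE 𝕜] : Set (κ → 𝕜) := {v | ∀ i, (A *ᵥ v) i ≤ b i}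

def activeSet (v : κ → 𝕜) : Set ι := {i | (A *ᵥ v) i = b i}

def activeKernel (v : κ → 𝕜) : Submodule 𝕜 (κ → 𝕜) :=
  ⨅ i ∈ A.activeSet b v, LinearMap.ker ((LinearMap.proj i).comp A.mulVecLin)

variable {A b}

theorem mem_activeKernel {v d : κ → 𝕜} :
    d ∈ A.activeKernel b v ↔ ∀ i ∈ A.activeSet b v, (A *ᵥ d) i = 0 := by
  simp [activeKernel, Submodule.mem_iInf, LinearMap.mem_ker]

theorem activeKernel_anti {v w : κ → 𝕜} (h : A.activeSet b v ⊆ A.activeSet b w) :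
    A.activeKernel b w ≤ A.activeKernel b v :=
  fun _ hd ↦ mem_activeKernel.2 fun i hi ↦ mem_activeKernel.1 hd i (h hi)

theorem activeSet_subset_add_smul {v e : κ → 𝕜} (he : e ∈ A.activeKernel b v) (t : 𝕜) :
    A.activeSet b v ⊆ A.activeSet b (v + t • e) := by
  intro i hi
  have hi' : (A *ᵥ v) i = b i := hi
  simp [activeSet, mulVec_add, mulVec_smul, hi', mem_activeKernel.1 he i hi]

theorem eq_of_activeKernel_eq_bot {v w : κ → 𝕜} (hv : A.activeKernel b v = ⊥)
    (h : A.activeSet b v = A.activeSet b w) : v = w := by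
  have hsub : v - w ∈ A.activeKernel b v := by
    refine mem_activeKernel.2 fun i hi ↦ ?_
    have hiw : i ∈ A.activeSet b w := h ▸ hi
    simp only [mulVec_sub, Pi.sub_apply]
    rw [show (A *ᵥ v) i = b i from hi, show (A *ᵥ w) i = b i from hiw, sub_self]
  rwa [hv, Submodule.mem_bot, sub_eq_zero] at hsub

theorem finite_setOf_activeKernel_eq_bot [Finite ι] :
    {v | A.activeKernel b v = ⊥}.Finite :=
  Set.Finite.of_finite_image (Set.toFinite _) fun _ hv _ _ h ↦ eq_of_activeKernel_eq_bot hv h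

end ActiveConstraints

theorem mulVec_injective_of_rank_eq_card {𝕜 ι κ : Type*} [Field 𝕜] [Fintype κ]
    {A : Matrix ι κ 𝕜} (hA : A.rank = Fintype.card κ) : Function.Injective A.mulVec := by
  have h := LinearMap.finrank_range_add_finrank_ker A.mulVecLin
  rw [Module.finrank_fintype_fun_eq_card, ← rank, hA, add_eq_left,
    Submodule.finrank_eq_zero] at h
  exact LinearMap.ker_eq_bot.1 h

section Optimization

variable {𝕜 ι κ : Type*} [Field 𝕜] [LinearOrder 𝕜] [IsStrictOrderedRing 𝕜] [Fintype κ]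
  {A : Matrix ι κ 𝕜} {b : ι → 𝕜} {c v : κ → 𝕜}

theorem sub_mem_activeKernel_of_eq_midpoint {x y : κ → 𝕜} (hx : x ∈ A.polyhedron b)
    (hy : y ∈ A.polyhedron b) (hv : v = (x + y) / 2) : x - y ∈ A.activeKernel b v := by
  refine mem_activeKernel.2 fun i hi ↦ ?_
  have hvi : (A *ᵥ v) i = ((A *ᵥ x) i + (A *ᵥ y) i) / 2 := by
    have : v = (2 : 𝕜)⁻¹ • (x + y) := by
      rw [hv]; ext j; simp [div_eq_inv_mul]
    rw [this, mulVec_smul, mulVec_add]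
    simp only [Pi.smul_apply, Pi.add_apply, smul_eq_mul]
    ring
  have hi' : (A *ᵥ v) i = b i := hi
  have hxi := hx i
  have hyi := hy i
  rw [mulVec_sub, Pi.sub_apply]
  linarith

theorem eq_of_activeKernel_eq_bot_of_eq_midpoint (hv : A.activeKernel b v = ⊥) {x y : κ → 𝕜}
    (hx : x ∈ A.polyhedron b) (hy : y ∈ A.polyhedron b) (hmid : v = (x + y) / 2) : x = y := by
  have h := sub_mem_activeKernel_of_eq_midpoint hx hy hmid
  rwa [hv, Submodule.mem_bot, sub_eq_zero] at h

theorem exists_add_smul_mem_polyhedron_of_pos [Fintype ι] {e : κ → 𝕜}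
    (hv : v ∈ A.polyhedron b) (he : ∃ i, 0 < (A *ᵥ e) i) :
    ∃ t : 𝕜, 0 ≤ t ∧ v + t • e ∈ A.polyhedron b ∧
      ∃ i, 0 < (A *ᵥ e) i ∧ i ∈ A.activeSet b (v + t • e) := by
  classical
  set ratio : ι → 𝕜 := fun i ↦ (b i - (A *ᵥ v) i) / (A *ᵥ e) i
  have hval : ∀ (t : 𝕜) i, (A *ᵥ (v + t • e)) i = (A *ᵥ v) i + t * (A *ᵥ e) i := by
    simp [mulVec_add, mulVec_smul]
  obtain ⟨i₀, hi₀, hmin⟩ := Finset.exists_min_image {i | 0 < (A *ᵥ e) i} ratio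
    (by simpa [Finset.Nonempty] using he)
  rw [Finset.mem_filter_univ] at hi₀
  have ht : 0 ≤ ratio i₀ := div_nonneg (by linarith [hv i₀]) hi₀.le
  refine ⟨ratio i₀, ht, fun i ↦ ?_, i₀, hi₀, ?_⟩
  · rw [hval]
    rcases lt_or_ge 0 ((A *ᵥ e) i) with hi | hi
    · have := (le_div_iff₀ hi).1 (hmin i (by simpa using hi))
      linarith
    · linarith [hv i, mul_nonpos_of_nonneg_of_nonpos ht hi]
  · change (A *ᵥ (v + ratio i₀ • e)) i₀ = b i₀
    rw [hval, div_mul_cancel₀ _ hi₀.ne', add_sub_cancel]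

theorem exists_activeKernel_lt [Fintype ι] {e : κ → 𝕜} (hv : v ∈ A.polyhedron b)
    (he : e ∈ A.activeKernel b v) (hpos : ∃ i, 0 < (A *ᵥ e) i) (hce : 0 ≤ c ⬝ᵥ e) :
    ∃ w ∈ A.polyhedron b, A.activeKernel b w < A.activeKernel b v ∧ c ⬝ᵥ v ≤ c ⬝ᵥ w := by
  obtain ⟨t, ht, hw, i, hi, hiw⟩ := exists_add_smul_mem_polyhedron_of_pos hv hpos
  have he' : e ∉ A.activeKernel b (v + t • e) := fun h ↦ hi.ne' (mem_activeKernel.1 h i hiw)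
  refine ⟨v + t • e, hw, (activeKernel_anti (activeSet_subset_add_smul he t)).lt_of_not_ge
    fun h ↦ he' (h he), ?_⟩
  rw [dotProduct_add, dotProduct_smul, smul_eq_mul]
  exact le_add_of_nonneg_right (mul_nonneg ht hce)

theorem dotProduct_nonpos_of_mulVec_nonpos {d : κ → 𝕜}
    (hbdd : BddAbove ((c ⬝ᵥ ·) '' A.polyhedron b)) (hv : v ∈ A.polyhedron b)
    (hd : ∀ i, (A *ᵥ d) i ≤ 0) : c ⬝ᵥ d ≤ 0 := by
  by_contra! hcd
  obtain ⟨M, hM⟩ := hbdd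
  have hvM : c ⬝ᵥ v ≤ M := hM ⟨v, hv, rfl⟩
  set t := (M - c ⬝ᵥ v + 1) / (c ⬝ᵥ d)
  have ht : 0 ≤ t := div_nonneg (by linarith) hcd.le
  have hray : v + t • d ∈ A.polyhedron b := fun i ↦ by
    simpa [mulVec_add, mulVec_smul] using
      add_le_of_le_of_nonpos (hv i) (mul_nonpos_of_nonneg_of_nonpos ht (hd i))
  have hle : c ⬝ᵥ v + t * (c ⬝ᵥ d) ≤ M := by
    simpa [dotProduct_add, dotProduct_smul] using hM ⟨_, hray, rfl⟩
  rw [div_mul_cancel₀ _ hcd.ne'] at hle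
  linarith

theorem exists_ascent_direction (hA : Function.Injective A.mulVec)
    (hbdd : BddAbove ((c ⬝ᵥ ·) '' A.polyhedron b)) (hv : v ∈ A.polyhedron b)
    (hK : A.activeKernel b v ≠ ⊥) :
    ∃ e ∈ A.activeKernel b v, (∃ i, 0 < (A *ᵥ e) i) ∧ 0 ≤ c ⬝ᵥ e := by
  obtain ⟨d, hdK, hd⟩ := Submodule.exists_mem_ne_zero_of_ne_bot hK
  obtain ⟨d, hdK, i, hi⟩ : ∃ d ∈ A.activeKernel b v, ∃ i, 0 < (A *ᵥ d) i := by
    obtain ⟨i, hi⟩ : ∃ i, (A *ᵥ d) i ≠ 0 := by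
      by_contra! h
      exact hd (hA (by rw [mulVec_zero]; exact funext h))
    rcases hi.lt_or_gt with hi | hi
    · exact ⟨-d, neg_mem hdK, i, by simpa [mulVec_neg] using hi⟩
    · exact ⟨d, hdK, i, hi⟩
  rcases le_or_gt 0 (c ⬝ᵥ d) with hcd | hcd
  · exact ⟨d, hdK, ⟨i, hi⟩, hcd⟩
  -- `-d` increases the objective, so boundedness forces it to push against some constraint.
  refine ⟨-d, neg_mem hdK, ?_, by rw [dotProduct_neg]; linarith⟩
  by_contra! h
  have := dotProduct_nonpos_of_mulVec_nonpos hbdd hv h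
  rw [dotProduct_neg] at this
  linarith

theorem exists_activeKernel_eq_bot_le [Fintype ι] (hA : Function.Injective A.mulVec)
    (hbdd : BddAbove ((c ⬝ᵥ ·) '' A.polyhedron b)) (hv : v ∈ A.polyhedron b) :
    ∃ w ∈ A.polyhedron b, A.activeKernel b w = ⊥ ∧ c ⬝ᵥ v ≤ c ⬝ᵥ w := by
  induction v using (InvImage.wf (A.activeKernel b) wellFounded_lt).induction with
  | _ v ih =>
  by_cases hK : A.activeKernel b v = ⊥
  · exact ⟨v, hv, hK, le_rfl⟩
  obtain ⟨e, heK, hpos, hce⟩ := exists_ascent_direction hA hbdd hv hK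
  obtain ⟨u, hu, hlt, hvu⟩ := exists_activeKernel_lt hv heK hpos hce
  obtain ⟨w, hw, hwK, huw⟩ := ih u hlt hu
  exact ⟨w, hw, hwK, hvu.trans huw⟩

theorem exists_activeKernel_eq_bot_isMaxOn [Fintype ι] (hA : Function.Injective A.mulVec)
    (hbdd : BddAbove ((c ⬝ᵥ ·) '' A.polyhedron b)) (hne : (A.polyhedron b).Nonempty) :
    ∃ v ∈ A.polyhedron b, A.activeKernel b v = ⊥ ∧ IsMaxOn (c ⬝ᵥ ·) (A.polyhedron b) v := by
  set S := A.polyhedron b ∩ {v | A.activeKernel b v = ⊥}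
  have hSne : S.Nonempty := by
    obtain ⟨v, hv⟩ := hne
    obtain ⟨w, hw, hwK, -⟩ := exists_activeKernel_eq_bot_le hA hbdd hv
    exact ⟨w, hw, hwK⟩
  obtain ⟨v, ⟨hv, hvK⟩, hmax⟩ := S.exists_max_image (c ⬝ᵥ ·)
    (finite_setOf_activeKernel_eq_bot.subset Set.inter_subset_right) hSne
  refine ⟨v, hv, hvK, fun u hu ↦ ?_⟩
  obtain ⟨w, hw, hwK, huw⟩ := exists_activeKernel_eq_bot_le hA hbdd hu
  exact huw.trans (hmax w ⟨hw, hwK⟩)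

end Optimization

end Matrix

/-- If `P = {v : D v ≤ b}` is nonempty, `rank D = n`, and
`sup {cᵀv : v ∈ P}` is finite, then the supremum is attained at an extreme point of `P`
(a point of `P` that is not the midpoint of two distinct points of `P`). -/
theorem polyhedron_sup_attained_at_extreme_point (m n : ℕ)
    (D : Matrix (Fin m) (Fin n) ℝ) (b : Fin m → ℝ) (c : Fin n → ℝ)
    (hrank : D.rank = n)
    (P : Set (Fin n → ℝ)) (hP : P = {v | ∀ i, D.mulVec v i ≤ b i})
    (hne : P.Nonempty)
    (hbdd : BddAbove ((fun v => ∑ j, c j * v j) '' P)) :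
    ∃ v ∈ P, (∀ x ∈ P, ∀ y ∈ P, v = (x + y) / 2 → x = y) ∧
      (∑ j, c j * v j) = sSup ((fun v => ∑ j, c j * v j) '' P) := by
  subst hP
  have hD : Function.Injective D.mulVec :=
    mulVec_injective_of_rank_eq_card (by rw [hrank, Fintype.card_fin])
  obtain ⟨v, hv, hvK, hmax⟩ := exists_activeKernel_eq_bot_isMaxOn hD hbdd hne
  refine ⟨v, hv, fun x hx y hy ↦ eq_of_activeKernel_eq_bot_of_eq_midpoint hvK hx hy, ?_⟩
  symm
  exact IsGreatest.csSup_eq ⟨⟨v, hv, rfl⟩, Set.forall_mem_image.2 (isMaxOn_iff.1 hmax)⟩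
end

section
/- Let A be a real m×n matrix, c ∈ ℝⁿ, FC(A) = {v ∈ ℝⁿ : A v = 0, v ≥ 0 componentwise}, and FP(A) = {e ∈ FC(A) : Σ_{j=1}^n e_j ≤ 1}. Suppose e* is an extreme point of FP(A) (a point of FP(A) not expressible as the midpoint of two distinct points of FP(A)) that minimizes cᵀe over FP(A), and suppose cᵀe* < 0. Then e* ≠ 0 and e* spans an extreme ray of FC(A): whenever e* = x + y with x ∈ FC(A) and y ∈ FC(A), both x and y are nonnegative scalar multiples of e*. -/
/-! An optimal `e` with negative cost lies on the face `∑ j, e j = 1`: otherwise some multiple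
`t • e` with `t > 1` is still feasible and strictly cheaper. A decomposition `e = x + y` inside the
flux cone then exhibits `e` as a convex combination of the normalized points `x / ∑ x` and `y / ∑ y`
of the flux polyhedron, and extremality forces both to equal `e`. -/

open Matrix

section ConvexSet

variable {E : Type*} [AddCommGroup E] [Module ℝ E]

/- If `e = a • x + b • y` with `a ≤ 1/2`, then `e` is the midpoint of `y` and the point
`2a • x + (1 - 2a) • y` of the segment `[x, y]`. -/
theorem mem_extremePoints_of_forall_midpoint {S : Set E} (hS : Convex ℝ S) {e : E} (he : e ∈ S)
    (h : ∀ x ∈ S, ∀ y ∈ S, e = midpoint ℝ x y → x = y) : e ∈ S.extremePoints ℝ := by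
  have of_weight_le_half : ∀ x ∈ S, ∀ y ∈ S, ∀ a b : ℝ, 0 < a → a + b = 1 →
      a • x + b • y = e → a ≤ 1 / 2 → x = y := by
    intro x hx y hy a b ha hab hxy ha2
    have hp : (2 * a) • x + (1 - 2 * a) • y ∈ S := hS hx hy (by linarith) (by linarith) (by ring)
    have hmid : e = midpoint ℝ ((2 * a) • x + (1 - 2 * a) • y) y := by
      rw [midpoint_eq_smul_add, ← hxy, eq_sub_of_add_eq' hab, invOf_eq_inv]
      module
    have h2a : (2 * a) • (x - y) = 0 := by
      rw [show (2 * a) • (x - y) = (2 * a) • x + (1 - 2 * a) • y - y by module,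
        h _ hp y hy hmid, sub_self]
    exact sub_eq_zero.1 ((smul_eq_zero.1 h2a).resolve_left (by positivity))
  refine mem_extremePoints_iff_left.2 ⟨he, fun x hx y hy ⟨a, b, ha, hb, hab, hxy⟩ => ?_⟩
  have hxy' : x = y := by
    rcases le_or_gt a (1 / 2) with ha2 | ha2
    · exact of_weight_le_half x hx y hy a b ha hab hxy ha2
    · exact (of_weight_le_half y hy x hx b a hb (by linarith) (by rwa [add_comm])
        (by linarith)).symm
  rw [← hxy, hxy', ← add_smul, hab, one_smul]

end ConvexSet

section PointedCone

variable {E : Type*} [AddCommGroup E] [Module ℝ E] {K : PointedCone ℝ E} {s : E →ₗ[ℝ] ℝ} {e : E}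

theorem apply_eq_one_of_isMinOn {φ : E →ₗ[ℝ] ℝ} (he : e ∈ {v ∈ K | s v ≤ 1})
    (hmin : IsMinOn φ {v ∈ K | s v ≤ 1} e) (hneg : φ e < 0) : s e = 1 := by
  by_contra hne
  have hlt : s e < 1 := lt_of_le_of_ne he.2 hne
  obtain ⟨t, ht1, hts⟩ : ∃ t : ℝ, 1 < t ∧ t * s e ≤ 1 := by
    rcases le_or_gt (s e) 0 with h0 | h0
    · exact ⟨2, one_lt_two, by linarith⟩
    · exact ⟨(s e)⁻¹, (one_lt_inv₀ h0).2 hlt, (inv_mul_cancel₀ h0.ne').le⟩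
  have hte : t • e ∈ {v ∈ K | s v ≤ 1} :=
    ⟨K.smul_mem (by linarith) he.1, by rwa [map_smul, smul_eq_mul]⟩
  have := isMinOn_iff.1 hmin _ hte
  rw [map_smul, smul_eq_mul] at this
  nlinarith

theorem exists_nonneg_smul_of_mem_extremePoints (hs : ∀ v ∈ K, v ≠ 0 → 0 < s v)
    (he : e ∈ {v ∈ K | s v ≤ 1}.extremePoints ℝ) (he1 : s e = 1) {x y : E} (hx : x ∈ K)
    (hy : y ∈ K) (hexy : e = x + y) : ∃ a : ℝ, 0 ≤ a ∧ x = a • e := by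
  rcases eq_or_ne x 0 with rfl | hx0
  · exact ⟨0, le_rfl, (zero_smul ℝ e).symm⟩
  rcases eq_or_ne y 0 with rfl | hy0
  · exact ⟨1, zero_le_one, by rw [one_smul, hexy, add_zero]⟩
  have hsx := hs x hx hx0
  have hsy := hs y hy hy0
  have normalize : ∀ v ∈ K, 0 < s v → (s v)⁻¹ • v ∈ {v ∈ K | s v ≤ 1} := fun v hv hsv =>
    ⟨K.smul_mem (inv_nonneg.2 hsv.le) hv, by rw [map_smul, smul_eq_mul, inv_mul_cancel₀ hsv.ne']⟩
  have hseg : e ∈ openSegment ℝ ((s x)⁻¹ • x) ((s y)⁻¹ • y) := by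
    refine ⟨s x, s y, hsx, hsy, by rw [← map_add, ← hexy, he1], ?_⟩
    rw [smul_inv_smul₀ hsx.ne', smul_inv_smul₀ hsy.ne', hexy]
  have hxe := (mem_extremePoints_iff_left.1 he).2 _ (normalize x hx hsx) _ (normalize y hy hsy) hseg
  exact ⟨s x, hsx.le, by rw [← hxe, smul_inv_smul₀ hsx.ne']⟩

end PointedCone

def fluxCone {ι κ : Type*} [Fintype κ] (A : Matrix ι κ ℝ) : PointedCone ℝ (κ → ℝ) :=
  (LinearMap.ker A.mulVecLin).restrictScalars _ ⊓ PointedCone.positive ℝ _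

theorem mem_fluxCone {ι κ : Type*} [Fintype κ] {A : Matrix ι κ ℝ} {v : κ → ℝ} :
    v ∈ fluxCone A ↔ A *ᵥ v = 0 ∧ ∀ j, 0 ≤ v j := by
  simp [fluxCone, PointedCone.mem_positive, Pi.le_def]

theorem sum_pos_of_mem_fluxCone {ι κ : Type*} [Fintype κ] {A : Matrix ι κ ℝ} {v : κ → ℝ}
    (hv : v ∈ fluxCone A) (hv0 : v ≠ 0) : 0 < ∑ j, v j := by
  obtain ⟨j, hj⟩ := Function.ne_iff.1 hv0
  have hnonneg := (mem_fluxCone.1 hv).2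
  exact Finset.sum_pos' (fun i _ => hnonneg i) ⟨j, Finset.mem_univ j, (hnonneg j).lt_of_ne' hj⟩

/-- Let `FC(A) = {v : A v = 0, v ≥ 0}` and
`FP(A) = {e ∈ FC(A) : ∑ e_j ≤ 1}`. If `e*` is an extreme point of `FP(A)` minimizing
`cᵀe` over `FP(A)` with `cᵀe* < 0`, then `e* ≠ 0` and `e*` spans an extreme ray of
`FC(A)`: whenever `e* = x + y` with `x, y ∈ FC(A)`, both `x` and `y` are nonnegative
multiples of `e*`. -/
theorem optimal_extreme_point_spans_extreme_ray (m n : ℕ)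
    (A : Matrix (Fin m) (Fin n) ℝ) (c : Fin n → ℝ)
    (FC FP : Set (Fin n → ℝ))
    (hFC : FC = {v | A.mulVec v = 0 ∧ ∀ j, 0 ≤ v j})
    (hFP : FP = {e | e ∈ FC ∧ ∑ j, e j ≤ 1})
    (e : Fin n → ℝ) (heFP : e ∈ FP)
    (hext : ∀ x ∈ FP, ∀ y ∈ FP, e = (x + y) / 2 → x = y)
    (hmin : ∀ e' ∈ FP, ∑ j, c j * e j ≤ ∑ j, c j * e' j)
    (hneg : ∑ j, c j * e j < 0) :
    e ≠ 0 ∧ ∀ x ∈ FC, ∀ y ∈ FC, e = x + y →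
      (∃ a : ℝ, 0 ≤ a ∧ x = a • e) ∧ (∃ b : ℝ, 0 ≤ b ∧ y = b • e) := by
  set s : (Fin n → ℝ) →ₗ[ℝ] ℝ := dotProductBilin ℝ ℝ 1
  have hFC' : FC = fluxCone A := by
    ext v
    rw [hFC, SetLike.mem_coe, mem_fluxCone]
    rfl
  have hFP' : FP = {v ∈ fluxCone A | s v ≤ 1} := by
    ext v
    simp [hFP, hFC', s, one_dotProduct]
  subst hFP'
  rw [hFC']
  have hconv : Convex ℝ {v ∈ fluxCone A | s v ≤ 1} :=
    (fluxCone A).convex.inter (convex_halfSpace_le s.isLinear 1)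
  have hextr := mem_extremePoints_of_forall_midpoint hconv heFP fun x hx y hy hm =>
    hext x hx y hy (by rw [hm, midpoint_eq_smul_add]; ext; simp [div_eq_inv_mul])
  have he1 : s e = 1 := apply_eq_one_of_isMinOn (φ := dotProductBilin ℝ ℝ c) heFP
    (isMinOn_iff.2 hmin) hneg
  have hs : ∀ v ∈ fluxCone A, v ≠ 0 → 0 < s v := fun v hv hv0 => by
    simpa [s, one_dotProduct] using sum_pos_of_mem_fluxCone hv hv0
  refine ⟨by rintro rfl; simp at hneg, fun x hx y hy hexy => ⟨?_, ?_⟩⟩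
  · exact exists_nonneg_smul_of_mem_extremePoints hs hextr he1 hx hy hexy
  · exact exists_nonneg_smul_of_mem_extremePoints hs hextr he1 hy hx (hexy.trans (add_comm x y))
end

section
/- Let A be a real m×n matrix and FC(A) = {v ∈ ℝⁿ : A v = 0, v ≥ 0 componentwise}. For a nonzero e ∈ FC(A), the following are equivalent: (i) e is support-minimal in FC(A), i.e., there is no nonzero v ∈ FC(A) whose support {j : v_j ≠ 0} is a proper subset of the support {j : e_j ≠ 0} of e; (ii) e spans an extreme ray of FC(A), i.e., whenever e = x + y with x, y ∈ FC(A), both x and y are nonnegative scalar multiples of e. -/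
/-!
Both directions rest on the minimum-ratio test: for nonnegative `u` and `w ≠ 0`, the largest
`t` with `t • w ≤ u` makes `u - t • w` vanish at some coordinate in the support of `w`.
If `e` is support-minimal and `x` is in the cone with support inside that of `e`, then
`x - t • e` lies in the cone with strictly smaller support, hence is zero; this applies to both
summands of `e = x + y`. Conversely, if some nonzero `v` has strictly smaller support than `e`,
then `e = t • v + (e - t • v)` is a decomposition in which `t • v` is not a multiple of `e`.
-/

open Function

theorem support_subset_of_nonneg_of_le {ι M : Type*} [Zero M] [PartialOrder M] {x e : ι → M}
    (hx : 0 ≤ x) (hxe : x ≤ e) : support x ⊆ support e :=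
  fun j hxj hej => hxj (le_antisymm (hej ▸ hxe j) (hx j))

variable {ι 𝕜 : Type*} [Field 𝕜] [LinearOrder 𝕜] [IsStrictOrderedRing 𝕜]

def nonnegCone (K : Submodule 𝕜 (ι → 𝕜)) : Set (ι → 𝕜) := {v | v ∈ K ∧ 0 ≤ v}

def IsSupportMinimal (C : Set (ι → 𝕜)) (e : ι → 𝕜) : Prop :=
  ¬ ∃ v ∈ C, v ≠ 0 ∧ support v ⊂ support e

def SpansExtremeRay (C : Set (ι → 𝕜)) (e : ι → 𝕜) : Prop :=
  ∀ x ∈ C, ∀ y ∈ C, e = x + y → (∃ a : 𝕜, 0 ≤ a ∧ x = a • e) ∧ (∃ b : 𝕜, 0 ≤ b ∧ y = b • e)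

theorem exists_smul_le_and_eq_of_nonneg [Finite ι] {u w : ι → 𝕜} (hu : 0 ≤ u) (hw : 0 ≤ w)
    (hw0 : w ≠ 0) : ∃ t : 𝕜, 0 ≤ t ∧ t • w ≤ u ∧ ∃ j, w j ≠ 0 ∧ u j = t * w j := by
  obtain ⟨j₀, hj₀, hmin⟩ := (support w).exists_min_image (fun j => u j / w j) (Set.toFinite _)
    (support_nonempty_iff.mpr hw0)
  refine ⟨u j₀ / w j₀, div_nonneg (hu j₀) (hw j₀), fun j => ?_, j₀, hj₀,
    (div_mul_cancel₀ _ hj₀).symm⟩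
  rcases (hw j).eq_or_lt with hwj | hwj
  · simpa [← hwj] using hu j
  · exact (le_div_iff₀ hwj).mp (hmin j hwj.ne')

namespace nonnegCone

variable {K : Submodule 𝕜 (ι → 𝕜)} {e x : ι → 𝕜}

theorem add_mem (hx : x ∈ nonnegCone K) {y : ι → 𝕜} (hy : y ∈ nonnegCone K) :
    x + y ∈ nonnegCone K :=
  ⟨K.add_mem hx.1 hy.1, add_nonneg hx.2 hy.2⟩

theorem sub_smul_mem (he : e ∈ nonnegCone K) (hx : x ∈ nonnegCone K) {t : 𝕜} (hle : t • x ≤ e) :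
    e - t • x ∈ nonnegCone K :=
  ⟨K.sub_mem he.1 (K.smul_mem t hx.1), sub_nonneg.mpr hle⟩

theorem smul_mem (hx : x ∈ nonnegCone K) {t : 𝕜} (ht : 0 ≤ t) : t • x ∈ nonnegCone K :=
  ⟨K.smul_mem t hx.1, smul_nonneg ht hx.2⟩

end nonnegCone

variable [Finite ι] {K : Submodule 𝕜 (ι → 𝕜)} {e x : ι → 𝕜}

theorem IsSupportMinimal.exists_eq_smul (hmin : IsSupportMinimal (nonnegCone K) e)
    (he : e ∈ nonnegCone K) (hx : x ∈ nonnegCone K) (hxe : support x ⊆ support e) :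
    ∃ a : 𝕜, 0 ≤ a ∧ x = a • e := by
  rcases eq_or_ne e 0 with rfl | he0
  · exact ⟨0, le_rfl, by simpa using hxe⟩
  obtain ⟨a, ha, hle, j₀, hej₀, hxj₀⟩ := exists_smul_le_and_eq_of_nonneg hx.2 he.2 he0
  have hsub : support (x - a • e) ⊂ support e := by
    refine (Set.ssubset_iff_of_subset fun j hj => ?_).mpr ⟨j₀, hej₀, by simp [hxj₀]⟩
    exact (Set.union_subset hxe (support_const_smul_subset a e)) (support_sub x (a • e) hj)
  have hzero : x - a • e = 0 :=
    by_contra fun hne => hmin ⟨_, nonnegCone.sub_smul_mem hx he hle, hne, hsub⟩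
  exact ⟨a, ha, sub_eq_zero.mp hzero⟩

theorem IsSupportMinimal.spansExtremeRay (hmin : IsSupportMinimal (nonnegCone K) e) :
    SpansExtremeRay (nonnegCone K) e := by
  rintro x hx y hy rfl
  have he := nonnegCone.add_mem hx hy
  exact
    ⟨hmin.exists_eq_smul he hx (support_subset_of_nonneg_of_le hx.2 (le_add_of_nonneg_right hy.2)),
      hmin.exists_eq_smul he hy (support_subset_of_nonneg_of_le hy.2 (le_add_of_nonneg_left hx.2))⟩

theorem SpansExtremeRay.isSupportMinimal (hext : SpansExtremeRay (nonnegCone K) e)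
    (he : e ∈ nonnegCone K) : IsSupportMinimal (nonnegCone K) e := by
  rintro ⟨v, hv, hv0, hsub⟩
  obtain ⟨t, ht, hle, j₀, hvj₀, hej₀⟩ := exists_smul_le_and_eq_of_nonneg he.2 hv.2 hv0
  obtain ⟨j₁, hej₁, hvj₁⟩ := (Set.ssubset_iff_of_subset hsub.subset).mp hsub
  obtain ⟨⟨a, -, hta⟩, -⟩ := hext _ (nonnegCone.smul_mem hv ht) _
    (nonnegCone.sub_smul_mem he hv hle) (add_sub_cancel _ _).symm
  have ha : a = 0 := by
    simpa [mem_support.mp hej₁, notMem_support.mp hvj₁] using (congrFun hta j₁).symm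
  exact hsub.subset hvj₀ (by simpa [hej₀, ha] using congrFun hta j₀)

theorem isSupportMinimal_iff_spansExtremeRay (he : e ∈ nonnegCone K) :
    IsSupportMinimal (nonnegCone K) e ↔ SpansExtremeRay (nonnegCone K) e :=
  ⟨IsSupportMinimal.spansExtremeRay, fun hext => hext.isSupportMinimal he⟩

theorem efm_iff_extreme_ray_general (m n : ℕ)
    (A : Matrix (Fin m) (Fin n) ℝ)
    (FC : Set (Fin n → ℝ))
    (hFC : FC = {v | A.mulVec v = 0 ∧ ∀ j, 0 ≤ v j})
    (e : Fin n → ℝ) (heFC : e ∈ FC) :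
    (¬ ∃ v ∈ FC, v ≠ 0 ∧ {j | v j ≠ 0} ⊂ {j | e j ≠ 0}) ↔
      (∀ x ∈ FC, ∀ y ∈ FC, e = x + y →
        (∃ a : ℝ, 0 ≤ a ∧ x = a • e) ∧ (∃ b : ℝ, 0 ≤ b ∧ y = b • e)) := by
  subst hFC
  exact isSupportMinimal_iff_spansExtremeRay (K := LinearMap.ker A.mulVecLin) heFC

/-- Lemma 1 of the paper, Gagneur–Klamt: For a nonzero `e` in the flux
cone `FC(A) = {v : A v = 0, v ≥ 0}`, `e` is support-minimal (an elementary flux mode)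
iff `e` spans an extreme ray of `FC(A)`. -/
theorem efm_iff_extreme_ray (m n : ℕ)
    (A : Matrix (Fin m) (Fin n) ℝ)
    (FC : Set (Fin n → ℝ))
    (hFC : FC = {v | A.mulVec v = 0 ∧ ∀ j, 0 ≤ v j})
    (e : Fin n → ℝ) (heFC : e ∈ FC) (he0 : e ≠ 0) :
    (¬ ∃ v ∈ FC, v ≠ 0 ∧ {j | v j ≠ 0} ⊂ {j | e j ≠ 0}) ↔
      (∀ x ∈ FC, ∀ y ∈ FC, e = x + y →
        (∃ a : ℝ, 0 ≤ a ∧ x = a • e) ∧ (∃ b : ℝ, 0 ≤ b ∧ y = b • e)) :=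
  efm_iff_extreme_ray_general m n A FC hFC e heFC
end
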